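/- arXiv:math-ph/0007015 — 4 statements merged into one kernel-verified Lean document; each statement's English description precedes it below -/
import Mathlib

section
/- The Barnes zeta function ζ_B(s,a) = Σ_{m⃗∈ℕ₀^d}(a+|m⃗|)^{-s} has residue at s = d equal to 1/(d-1)!, and residue at s = d-1 equal to (d-2a)/(2(d-2)!). -/
open Filter Topology Complex Polynomial Finset Nat HurwitzZeta

/-!
Write `d = r + 1`. As a polynomial in `n + a`, `C(n + r, r) = (n + 1)⋯(n + r) / r!` equals
`(1/r!) ∑ c_j (n + a)^j`, where `∏_{k=1}^{r} (X + k - a) = ∑ c_j X^j`; hence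
`ζ_B(s, a) = (1/r!) ∑_{j ≤ r} c_j ζ(s - j, a)` with `ζ(s, a)` the Hurwitz zeta function.
Since `ζ(s, a)` is entire except for a simple pole of residue `1` at `s = 1`, the residue of
`ζ_B(·, a)` at `s = j + 1` is `c_j / r!`; here `c_r = 1` and
`c_{r-1} = ∑_{k=1}^{r} (k - a) = r (r + 1 - 2a) / 2`. By the identity theorem on the connected
complement of `{1, …, d}`, `f` is this continuation.
-/

lemma tendsto_sub_mul_nhdsNE_zero {h : ℂ → ℂ} {z : ℂ} (hh : ContinuousAt h z) :
    Tendsto (fun s => (s - z) * h s) (𝓝[≠] z) (𝓝 0) := by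
  have hc : ContinuousAt (fun s => (s - z) * h s) z := (continuousAt_id.sub_const z).mul hh
  simpa using hc.tendsto.mono_left nhdsWithin_le_nhds

lemma sub_ceil_sub_one_mem_Ioc {a : ℝ} (ha : 0 < a) : a - (⌈a⌉₊ - 1 : ℕ) ∈ Set.Ioc 0 1 := by
  rw [Nat.cast_sub (Nat.one_le_ceil_iff.mpr ha), Nat.cast_one]
  constructor <;> linarith [Nat.ceil_lt_add_one ha.le, Nat.le_ceil a]

lemma natCast_add_ofReal_ne_zero {b : ℝ} (hb : 0 < b) (n : ℕ) : (n : ℂ) + b ≠ 0 := by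
  exact_mod_cast (by positivity : (0 : ℝ) < n + b).ne'

lemma differentiable_sum_range_cpow_neg {b : ℝ} (hb : 0 < b) (m : ℕ) :
    Differentiable ℂ fun s : ℂ => ∑ n ∈ range m, ((n : ℂ) + b) ^ (-s) :=
  Differentiable.fun_sum fun n _ =>
    differentiable_neg.const_cpow (Or.inl (natCast_add_ofReal_ne_zero hb n))

/-- The Hurwitz zeta function `ζ(s, a)` for every `a > 0`. Mathlib's `hurwitzZeta b` continues
`∑ (n + b) ^ (-s)` only for `b ∈ [0, 1]`, so we write `a = m + b` with `m = ⌈a⌉₊ - 1` and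
`b ∈ (0, 1]` (not `[0, 1)`, so that the dropped terms `(n + b) ^ (-s)` are entire), and drop
the first `m` terms of `ζ(s, b)`. -/
noncomputable def hurwitzZetaOfPos (a : ℝ) (s : ℂ) : ℂ :=
  hurwitzZeta ((a - (⌈a⌉₊ - 1 : ℕ) : ℝ) : UnitAddCircle) s -
    ∑ n ∈ range (⌈a⌉₊ - 1), ((n : ℂ) + (a - (⌈a⌉₊ - 1 : ℕ) : ℝ)) ^ (-s)

lemma hasSum_hurwitzZetaOfPos {a : ℝ} (ha : 0 < a) {s : ℂ} (hs : 1 < s.re) :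
    HasSum (fun n : ℕ => ((n : ℂ) + a) ^ (-s)) (hurwitzZetaOfPos a s) := by
  set m := ⌈a⌉₊ - 1
  have hb := sub_ceil_sub_one_mem_Ioc ha
  have hζ : HasSum (fun n : ℕ => ((n : ℂ) + (a - m : ℝ)) ^ (-s))
      (hurwitzZeta ((a - m : ℝ) : UnitAddCircle) s) := by
    simpa only [cpow_neg, one_div] using
      hasSum_hurwitzZeta_of_one_lt_re (Set.Ioc_subset_Icc_self hb) hs
  refine ((hasSum_nat_add_iff' m).mpr hζ).congr_fun fun n => ?_
  push_cast
  ring_nf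

lemma differentiableAt_hurwitzZetaOfPos {a : ℝ} (ha : 0 < a) {s : ℂ} (hs : s ≠ 1) :
    DifferentiableAt ℂ (hurwitzZetaOfPos a) s :=
  (differentiableAt_hurwitzZeta _ hs).sub
    (differentiable_sum_range_cpow_neg (sub_ceil_sub_one_mem_Ioc ha).1 _ s)

lemma hurwitzZetaOfPos_residue_one {a : ℝ} (ha : 0 < a) :
    Tendsto (fun s => (s - 1) * hurwitzZetaOfPos a s) (𝓝[≠] 1) (𝓝 1) := by
  have hsum := tendsto_sub_mul_nhdsNE_zero
    ((differentiable_sum_range_cpow_neg (sub_ceil_sub_one_mem_Ioc ha).1 (⌈a⌉₊ - 1)).continuous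
      |>.continuousAt (x := 1))
  simpa only [hurwitzZetaOfPos, mul_sub, sub_zero] using (hurwitzZeta_residue_one _).sub hsum

/-- `∑ n, P(n + a) (n + a) ^ (-s)`, continued by expanding `P` in powers of `n + a`. -/
noncomputable def polyHurwitzZeta (P : ℂ[X]) (a : ℝ) (s : ℂ) : ℂ :=
  ∑ j ∈ range (P.natDegree + 1), P.coeff j * hurwitzZetaOfPos a (s - j)

lemma hasSum_polyHurwitzZeta (P : ℂ[X]) {a : ℝ} (ha : 0 < a) {s : ℂ}
    (hs : (P.natDegree + 1 : ℝ) < s.re) :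
    HasSum (fun n : ℕ => P.eval ((n : ℂ) + a) * ((n : ℂ) + a) ^ (-s)) (polyHurwitzZeta P a s) := by
  have hterm : ∀ j ∈ range (P.natDegree + 1), HasSum
      (fun n : ℕ => P.coeff j * ((n : ℂ) + a) ^ j * ((n : ℂ) + a) ^ (-s))
      (P.coeff j * hurwitzZetaOfPos a (s - j)) := by
    intro j hj
    have hsj : 1 < (s - j).re := by
      have : (j : ℝ) ≤ P.natDegree := by exact_mod_cast Nat.lt_succ_iff.mp (mem_range.mp hj)
      rw [sub_re, natCast_re]
      linarith
    refine ((hasSum_hurwitzZetaOfPos ha hsj).mul_left (P.coeff j)).congr_fun fun n => ?_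
    rw [mul_assoc, ← cpow_natCast, ← cpow_add _ _ (natCast_add_ofReal_ne_zero ha n), neg_sub,
      sub_eq_add_neg]
  refine (hasSum_sum hterm).congr_fun fun n => ?_
  rw [eval_eq_sum_range, sum_mul]

lemma differentiableAt_polyHurwitzZeta (P : ℂ[X]) {a : ℝ} (ha : 0 < a) {s : ℂ}
    (hs : ∀ j ≤ P.natDegree, s ≠ j + 1) : DifferentiableAt ℂ (polyHurwitzZeta P a) s := by
  refine DifferentiableAt.fun_sum fun j hj => DifferentiableAt.const_mul ?_ _
  have hsj : s - j ≠ 1 := fun h =>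
    hs j (Nat.lt_succ_iff.mp (mem_range.mp hj)) (by rw [← h]; ring)
  exact (differentiableAt_hurwitzZetaOfPos ha hsj).comp s (differentiableAt_id.sub_const _)

lemma polyHurwitzZeta_residue (P : ℂ[X]) {a : ℝ} (ha : 0 < a) (p : ℕ) :
    Tendsto (fun s => (s - (p + 1)) * polyHurwitzZeta P a s) (𝓝[≠] (p + 1 : ℂ))
      (𝓝 (P.coeff p)) := by
  have hterm : ∀ j ∈ range (P.natDegree + 1),
      Tendsto (fun s => P.coeff j * ((s - (p + 1)) * hurwitzZetaOfPos a (s - j)))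
        (𝓝[≠] (p + 1 : ℂ)) (𝓝 (if j = p then P.coeff p else 0)) := by
    intro j _
    split_ifs with hjp
    · subst hjp
      have hshift : Tendsto (· - (j : ℂ)) (𝓝[≠] (j + 1 : ℂ)) (𝓝[≠] (j + 1 - j)) :=
        map_subRight_nhdsNE.le
      rw [add_sub_cancel_left] at hshift
      simpa [sub_sub, add_comm (1 : ℂ)] using
        ((hurwitzZetaOfPos_residue_one ha).comp hshift).const_mul (P.coeff j)
    · have hpj : (p + 1 : ℂ) - j ≠ 1 := fun h =>
        hjp (Nat.cast_injective (by linear_combination -h : (j : ℂ) = p))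
      have hcont : ContinuousAt (fun s => hurwitzZetaOfPos a (s - j)) (p + 1 : ℂ) :=
        (differentiableAt_hurwitzZetaOfPos ha hpj).continuousAt.comp_of_eq
          (continuousAt_id.sub_const _) rfl
      simpa using (tendsto_sub_mul_nhdsNE_zero hcont).const_mul (P.coeff j)
  have hcoeff :
      ∑ j ∈ range (P.natDegree + 1), (if j = p then P.coeff p else 0) = P.coeff p := by
    rw [sum_ite_eq', ite_eq_left_iff, mem_range, not_lt, Nat.succ_le_iff]
    exact fun h => (coeff_eq_zero_of_natDegree_lt h).symm
  rw [← hcoeff]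
  simpa only [polyHurwitzZeta, mul_sum, mul_left_comm] using tendsto_finsetSum _ hterm

noncomputable def barnesPoly (r : ℕ) (a : ℂ) : ℂ[X] :=
  ∏ k ∈ range r, (X + C ((k : ℂ) + 1 - a))

lemma monic_barnesPoly (r : ℕ) (a : ℂ) : (barnesPoly r a).Monic :=
  monic_prod_of_monic _ _ fun _ _ => monic_X_add_C _

lemma natDegree_barnesPoly (r : ℕ) (a : ℂ) : (barnesPoly r a).natDegree = r := by
  rw [barnesPoly, natDegree_prod_of_monic _ _ fun _ _ => monic_X_add_C _]
  simp only [natDegree_X_add_C, sum_const, card_range, smul_eq_mul, mul_one]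

lemma coeff_barnesPoly_self (r : ℕ) (a : ℂ) : (barnesPoly r a).coeff r = 1 := by
  simpa only [natDegree_barnesPoly] using (monic_barnesPoly r a).coeff_natDegree

lemma coeff_barnesPoly_succ_self (r : ℕ) (a : ℂ) :
    (barnesPoly (r + 1) a).coeff r = (r + 1) * (r + 2 - 2 * a) / 2 := by
  have hnext : (barnesPoly (r + 1) a).nextCoeff = ∑ k ∈ range (r + 1), ((k : ℂ) + 1 - a) := by
    rw [barnesPoly, Monic.nextCoeff_prod _ _ fun _ _ => monic_X_add_C _]
    simp only [nextCoeff_X_add_C]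
  have hsum : ∀ n : ℕ, ∑ k ∈ range n, ((k : ℂ) + 1 - a) = n * (n + 1 - 2 * a) / 2 := by
    intro n
    induction n with
    | zero => simp
    | succ n ih => rw [sum_range_succ, ih]; push_cast; ring
  rw [nextCoeff_of_natDegree_pos (by rw [natDegree_barnesPoly]; omega), natDegree_barnesPoly,
    Nat.add_sub_cancel, hsum] at hnext
  rw [hnext]
  push_cast
  ring

lemma eval_barnesPoly (r n : ℕ) (a : ℂ) :
    (barnesPoly r a).eval ((n : ℂ) + a) = r ! * (n + r).choose r := by
  have hfactor : ∀ k ∈ range r,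
      (X + C ((k : ℂ) + 1 - a)).eval ((n : ℂ) + a) = ((n + 1 + k : ℕ) : ℂ) := by
    intro k _
    simp only [eval_add, eval_X, eval_C]
    push_cast
    ring
  rw [barnesPoly, eval_prod, prod_congr rfl hfactor, ← Nat.cast_prod,
    ← Nat.ascFactorial_eq_prod_range, Nat.ascFactorial_eq_factorial_mul_choose]
  push_cast
  rfl

/-- `ζ_B(s, a)` in dimension `d = r + 1`, using `C(n + r, r) = (barnesPoly r a).eval (n + a) / r!`.
-/
noncomputable def barnesZeta (r : ℕ) (a : ℝ) (s : ℂ) : ℂ :=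
  (r ! : ℂ)⁻¹ * polyHurwitzZeta (barnesPoly r a) a s

lemma hasSum_barnesZeta (r : ℕ) {a : ℝ} (ha : 0 < a) {s : ℂ} (hs : (r + 1 : ℝ) < s.re) :
    HasSum (fun n : ℕ => ((n + r).choose r : ℂ) * ((n : ℂ) + a) ^ (-s)) (barnesZeta r a s) := by
  have h := (hasSum_polyHurwitzZeta (barnesPoly r a) ha (by rwa [natDegree_barnesPoly])).mul_left
    (r ! : ℂ)⁻¹
  refine h.congr_fun fun n => ?_
  rw [eval_barnesPoly, ← mul_assoc, ← mul_assoc,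
    inv_mul_cancel₀ (by exact_mod_cast r.factorial_ne_zero), one_mul]

lemma differentiableAt_barnesZeta (r : ℕ) {a : ℝ} (ha : 0 < a) {s : ℂ}
    (hs : ∀ j ≤ r, s ≠ j + 1) : DifferentiableAt ℂ (barnesZeta r a) s :=
  (differentiableAt_polyHurwitzZeta _ ha (by rwa [natDegree_barnesPoly])).const_mul _

lemma barnesZeta_residue (r : ℕ) {a : ℝ} (ha : 0 < a) (p : ℕ) :
    Tendsto (fun s => (s - (p + 1)) * barnesZeta r a s) (𝓝[≠] (p + 1 : ℂ))
      (𝓝 ((r ! : ℂ)⁻¹ * (barnesPoly r a).coeff p)) := by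
  simpa only [barnesZeta, mul_left_comm] using
    (polyHurwitzZeta_residue _ ha p).const_mul (r ! : ℂ)⁻¹

lemma barnesZeta_residue_top (r : ℕ) {a : ℝ} (ha : 0 < a) :
    Tendsto (fun s => (s - (r + 1)) * barnesZeta r a s) (𝓝[≠] (r + 1 : ℂ)) (𝓝 (r ! : ℂ)⁻¹) := by
  simpa only [coeff_barnesPoly_self, mul_one] using barnesZeta_residue r ha r

lemma barnesZeta_succ_residue_self (r : ℕ) {a : ℝ} (ha : 0 < a) :
    Tendsto (fun s => (s - (r + 1)) * barnesZeta (r + 1) a s) (𝓝[≠] (r + 1 : ℂ))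
      (𝓝 ((r + 2 - 2 * a) / (2 * r !))) := by
  have hvalue :
      ((r + 1)! : ℂ)⁻¹ * (barnesPoly (r + 1) a).coeff r = (r + 2 - 2 * a) / (2 * r !) := by
    rw [coeff_barnesPoly_succ_self, factorial_succ]
    push_cast
    field_simp
  simpa only [hvalue] using barnesZeta_residue (r + 1) ha r

lemma AnalyticOnNhd.eventuallyEq_nhdsNE_of_compl_finite {f g : ℂ → ℂ} {S : Set ℂ}
    (hS : S.Finite) (hf : AnalyticOnNhd ℂ f Sᶜ) (hg : AnalyticOnNhd ℂ g Sᶜ) {z₀ : ℂ}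
    (hz₀ : z₀ ∉ S) (hfg : f =ᶠ[𝓝 z₀] g) (z : ℂ) : f =ᶠ[𝓝[≠] z] g := by
  have hconn : IsPreconnected Sᶜ := (hS.countable.isPathConnected_compl_of_one_lt_rank
    (by rw [rank_real_complex]; norm_num)).isConnected.isPreconnected
  filter_upwards [nhdsNE_le_cofinite z hS.compl_mem_cofinite] using
    hf.eqOn_of_preconnected_of_eventuallyEq hg hconn hz₀ hfg

lemma eventuallyEq_barnesZeta (r : ℕ) {a : ℝ} (ha : 0 < a) {f : ℂ → ℂ}
    (hsum : ∀ s : ℂ, (r + 1 : ℝ) < s.re →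
      HasSum (fun n : ℕ => ((n + r).choose r : ℂ) * ((n : ℂ) + a) ^ (-s)) (f s))
    (hanal : ∀ s : ℂ, (∀ j ≤ r, s ≠ j + 1) → AnalyticAt ℂ f s) (z : ℂ) :
    f =ᶠ[𝓝[≠] z] barnesZeta r a := by
  set S : Set ℂ := (fun j : ℕ => (j + 1 : ℂ)) '' Set.Iic r
  have hS : S.Finite := (Set.finite_Iic r).image _
  have hnotMem {s : ℂ} (hs : s ∉ S) (j : ℕ) (hj : j ≤ r) : s ≠ j + 1 :=
    fun h => hs ⟨j, hj, h.symm⟩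
  have hf : AnalyticOnNhd ℂ f Sᶜ := fun s hs => hanal s (hnotMem hs)
  have hζ : AnalyticOnNhd ℂ (barnesZeta r a) Sᶜ :=
    DifferentiableOn.analyticOnNhd (fun s hs =>
      (differentiableAt_barnesZeta r ha (hnotMem hs)).differentiableWithinAt)
      hS.isClosed.isOpen_compl
  have hz₀ : ((r + 2 : ℕ) : ℂ) ∉ S := fun ⟨j, hj, hjr⟩ => by
    have : j + 1 = r + 2 := by simp only at hjr; exact_mod_cast hjr
    exact absurd (Set.mem_Iic.mp hj) (by omega)
  have hagree : f =ᶠ[𝓝 ((r + 2 : ℕ) : ℂ)] barnesZeta r a := by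
    filter_upwards [(isOpen_lt continuous_const continuous_re).mem_nhds
      (show (r + 1 : ℝ) < ((r + 2 : ℕ) : ℂ).re by norm_num)] with s hs
    exact (hsum s hs).unique (hasSum_barnesZeta r ha hs)
  exact hf.eventuallyEq_nhdsNE_of_compl_finite hS hζ hz₀ hagree z

/-- The Barnes zeta function ζ_B(s,a) = Σ_{n≥0} C(d+n-1,n)(n+a)^{-s} (d ≥ 2, a > 0),
meromorphically continued, has residue 1/(d-1)! at s = d and residue
(d-2a)/(2(d-2)!) at s = d-1. -/
theorem barnes_zeta_residues_d_and_d_sub_one (d : ℕ) (hd : 2 ≤ d) (a : ℝ) (ha : 0 < a)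
    (f : ℂ → ℂ)
    (hsum : ∀ s : ℂ, (d : ℝ) < s.re →
      HasSum (fun n : ℕ => ((d + n - 1).choose n : ℂ) * ((n : ℂ) + (a : ℂ)) ^ (-s)) (f s))
    (hanal : ∀ s : ℂ, (∀ k : ℕ, 1 ≤ k → k ≤ d → s ≠ (k : ℂ)) → AnalyticAt ℂ f s) :
    Tendsto (fun s : ℂ => (s - (d : ℂ)) * f s) (𝓝[≠] (d : ℂ))
      (𝓝 (((d - 1).factorial : ℂ)⁻¹)) ∧
    Tendsto (fun s : ℂ => (s - ((d : ℂ) - 1)) * f s) (𝓝[≠] ((d : ℂ) - 1))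
      (𝓝 (((d : ℂ) - 2 * (a : ℂ)) / (2 * ((d - 2).factorial : ℂ)))) := by
  obtain ⟨r, rfl⟩ : ∃ r, d = r + 2 := ⟨d - 2, by omega⟩
  have hf : ∀ z, f =ᶠ[𝓝[≠] z] barnesZeta (r + 1) a := by
    refine eventuallyEq_barnesZeta (r + 1) ha (fun s hs => ?_) (fun s hs => ?_)
    · convert hsum s (by exact_mod_cast hs) using 3 with n
      rw [show r + 2 + n - 1 = n + (r + 1) by omega, Nat.choose_symm_add]
    · refine hanal s fun k hk hkr => ?_
      obtain ⟨j, rfl⟩ : ∃ j, k = j + 1 := ⟨k - 1, by omega⟩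
      exact_mod_cast hs j (by omega)
  have hpole : ((r + 2 : ℕ) : ℂ) = (r + 1 : ℕ) + 1 := by push_cast; ring
  have hpole' : ((r + 2 : ℕ) : ℂ) - 1 = r + 1 := by push_cast; ring
  have hvalue :
      ((r + 2 : ℕ) - 2 * a) / (2 * ((r + 2 - 2)! : ℂ)) = (r + 2 - 2 * a) / (2 * r !) := by
    push_cast
    rfl
  have hresidue (z : ℂ) :
      (fun s => (s - z) * barnesZeta (r + 1) a s) =ᶠ[𝓝[≠] z] fun s => (s - z) * f s := by
    filter_upwards [hf z] with s hs
    rw [hs]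
  refine ⟨?_, ?_⟩
  · rw [hpole]
    exact (barnesZeta_residue_top (r + 1) ha).congr' (hresidue _)
  · rw [hpole', hvalue]
    exact (barnesZeta_succ_residue_self r ha).congr' (hresidue _)
end

section
/- For Re(s) strictly between 1/2 and 1, p > 0, and l > 0, the integral ∫_{ε/p}^∞ dz [(zp)² - ε²]^{-s} (d/dz)(1+z²)^{-l/2} equals -(l/2)·(Γ(s+l/2)Γ(1-s)/Γ(1+l/2))·p^l·(ε² + p²)^{-s-l/2}, where t = 1/√(1+z²) so that t^l = (1+z²)^{-l/2}. -/
/-!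
With `a = ε / p`, the substitution `t = (z² - a²) / (1 + z²)` maps `(a, ∞)` bijectively onto
`(0, 1)`, with `1 - t = (1 + a²) / (1 + z²)` and `dt = 2z (1 + a²) / (1 + z²)² dz`. It turns
`∫_a^∞ (z² - a²)^(α-1) z (1 + z²)^(-(α+β)) dz` into `(1 + a²)^(-β) B(α, β) / 2`, and
the integral of the theorem is of this shape with `α = 1 - s`, `β = s + l/2`. The one-dimensional
change of variables formula holds for every integrand (both sides are `0` when not integrable),
so no convergence has to be checked; `Re(1 - s), Re(s + l/2) > 0` is only needed to evaluate
`B(1 - s, s + l/2) = Γ(1 - s) Γ(s + l/2) / Γ(1 + l/2)`.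
-/

open MeasureTheory Set

theorem hasDerivAt_one_add_sq_rpow (r x : ℝ) :
    HasDerivAt (fun w : ℝ => (1 + w ^ 2) ^ r) (2 * x * r * (1 + x ^ 2) ^ (r - 1)) x := by
  refine (((hasDerivAt_pow 2 x).const_add 1).rpow_const (p := r)
    (Or.inl (by positivity))).congr_deriv ?_
  push_cast
  ring

theorem hasDerivAt_sq_sub_sq_div_one_add_sq (a z : ℝ) :
    HasDerivAt (fun z : ℝ => (z ^ 2 - a ^ 2) / (1 + z ^ 2))
      (2 * z * (1 + a ^ 2) / (1 + z ^ 2) ^ 2) z := by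
  refine (((hasDerivAt_pow 2 z).sub_const (a ^ 2)).div ((hasDerivAt_pow 2 z).const_add 1)
    (by positivity)).congr_deriv ?_
  push_cast
  ring

theorem injOn_sq_sub_sq_div_one_add_sq {a : ℝ} (ha : 0 ≤ a) :
    InjOn (fun z : ℝ => (z ^ 2 - a ^ 2) / (1 + z ^ 2)) (Ioi a) := by
  intro x hx y hy hxy
  have hxy' : x ^ 2 * (1 + a ^ 2) = y ^ 2 * (1 + a ^ 2) := by
    rw [div_eq_div_iff (by positivity) (by positivity)] at hxy
    linear_combination hxy
  exact (pow_left_inj₀ (ha.trans hx.le) (ha.trans hy.le) two_ne_zero).1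
    (mul_right_cancel₀ (by positivity) hxy')

theorem image_sq_sub_sq_div_one_add_sq_Ioi {a : ℝ} (ha : 0 ≤ a) :
    (fun z : ℝ => (z ^ 2 - a ^ 2) / (1 + z ^ 2)) '' Ioi a = Ioo 0 1 := by
  ext t
  constructor
  · rintro ⟨z, hz, rfl⟩
    have hz' : a ^ 2 < z ^ 2 := pow_lt_pow_left₀ hz ha two_ne_zero
    exact ⟨div_pos (by linarith) (by positivity), (div_lt_one (by positivity)).2 (by nlinarith)⟩
  · rintro ⟨ht0, ht1⟩
    have h1t : 0 < 1 - t := by linarith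
    have hlt : a ^ 2 < (a ^ 2 + t) / (1 - t) := by
      rw [lt_div_iff₀ h1t]
      nlinarith
    refine ⟨√((a ^ 2 + t) / (1 - t)), (Real.lt_sqrt ha).2 hlt, ?_⟩
    dsimp only
    rw [Real.sq_sqrt (by positivity), div_eq_iff (by positivity)]
    field_simp
    ring

theorem Complex.betaIntegral_eq_setIntegral_Ioo (u v : ℂ) :
    Complex.betaIntegral u v =
      ∫ t in Ioo (0 : ℝ) 1, (t : ℂ) ^ (u - 1) * (1 - (t : ℂ)) ^ (v - 1) := by
  rw [Complex.betaIntegral, intervalIntegral.integral_of_le zero_le_one,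
    integral_Ioc_eq_integral_Ioo]

theorem abs_deriv_smul_beta_integrand_sq_sub_sq_div_one_add_sq {a z : ℝ} (ha : 0 ≤ a)
    (hz : a < z) (α β : ℂ) :
    |2 * z * (1 + a ^ 2) / (1 + z ^ 2) ^ 2| •
        ((((z ^ 2 - a ^ 2) / (1 + z ^ 2) : ℝ) : ℂ) ^ (α - 1) *
          (1 - (((z ^ 2 - a ^ 2) / (1 + z ^ 2) : ℝ) : ℂ)) ^ (β - 1)) =
      2 * ((1 + a ^ 2 : ℝ) : ℂ) ^ β *
        (((z ^ 2 - a ^ 2 : ℝ) : ℂ) ^ (α - 1) * z *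
          ((1 + z ^ 2 : ℝ) : ℂ) ^ (-(α + β))) := by
  have hA : 0 ≤ z ^ 2 - a ^ 2 := sub_nonneg.2 (pow_le_pow_left₀ ha hz.le 2)
  have hB : ((1 + z ^ 2 : ℝ) : ℂ) ≠ 0 := Complex.ofReal_ne_zero.2 (by positivity)
  have hC : ((1 + a ^ 2 : ℝ) : ℂ) ≠ 0 := Complex.ofReal_ne_zero.2 (by positivity)
  have hBα : ((1 + z ^ 2 : ℝ) : ℂ) ^ α ≠ 0 := Complex.cpow_ne_zero_iff.2 (Or.inl hB)
  have hBβ : ((1 + z ^ 2 : ℝ) : ℂ) ^ β ≠ 0 := Complex.cpow_ne_zero_iff.2 (Or.inl hB)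
  have h_one_sub : 1 - (((z ^ 2 - a ^ 2) / (1 + z ^ 2) : ℝ) : ℂ) =
      ((1 + a ^ 2 : ℝ) : ℂ) / (1 + z ^ 2 : ℝ) := by
    rw [eq_div_iff hB, Complex.ofReal_div, sub_mul, div_mul_cancel₀ _ hB]
    push_cast
    ring
  rw [h_one_sub, Complex.ofReal_div, Complex.div_cpow_ofReal_nonneg hA (by positivity),
    Complex.div_cpow_ofReal_nonneg (by positivity) (by positivity),
    abs_of_nonneg (by have := ha.trans hz.le; positivity),
    Complex.cpow_sub _ _ hB, Complex.cpow_sub _ _ hB, Complex.cpow_sub _ _ hC, Complex.cpow_neg,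
    Complex.cpow_add _ _ hB, Complex.real_smul]
  simp only [Complex.ofReal_div, Complex.ofReal_mul, Complex.ofReal_pow, Complex.cpow_one]
  field_simp
  push_cast
  ring

theorem setIntegral_Ioi_sq_sub_sq_cpow_mul_one_add_sq_cpow {a : ℝ} (ha : 0 ≤ a) (α β : ℂ) :
    ∫ z in Ioi a,
        ((z ^ 2 - a ^ 2 : ℝ) : ℂ) ^ (α - 1) * z * ((1 + z ^ 2 : ℝ) : ℂ) ^ (-(α + β)) =
      ((1 + a ^ 2 : ℝ) : ℂ) ^ (-β) * Complex.betaIntegral α β / 2 := by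
  have hC : ((1 + a ^ 2 : ℝ) : ℂ) ^ β ≠ 0 :=
    Complex.cpow_ne_zero_iff.2 (Or.inl (Complex.ofReal_ne_zero.2 (by positivity)))
  have h := integral_image_eq_integral_abs_deriv_smul measurableSet_Ioi
    (fun z _ => (hasDerivAt_sq_sub_sq_div_one_add_sq a z).hasDerivWithinAt)
    (injOn_sq_sub_sq_div_one_add_sq ha)
    (fun t : ℝ => (t : ℂ) ^ (α - 1) * (1 - (t : ℂ)) ^ (β - 1))
  rw [image_sq_sub_sq_div_one_add_sq_Ioi ha, ← Complex.betaIntegral_eq_setIntegral_Ioo,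
    setIntegral_congr_fun measurableSet_Ioi
      fun z hz => abs_deriv_smul_beta_integrand_sq_sub_sq_div_one_add_sq ha hz α β,
    integral_const_mul] at h
  rw [h, Complex.cpow_neg]
  field_simp

theorem Complex.ofReal_sq_cpow_div_two {p : ℝ} (hp : 0 ≤ p) (r : ℝ) :
    ((p ^ 2 : ℝ) : ℂ) ^ ((r : ℂ) / 2) = ((p ^ r : ℝ) : ℂ) := by
  rw [show (r : ℂ) / 2 = ((r / 2 : ℝ) : ℂ) by push_cast; rfl,
    ← Complex.ofReal_cpow (by positivity),
    ← Real.rpow_natCast_mul hp, Nat.cast_ofNat, mul_div_cancel₀ _ two_ne_zero]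

theorem ofReal_sq_cpow_neg_mul_one_add_div_sq_cpow {p : ℝ} (hp : 0 < p) (ε l : ℝ) (s : ℂ) :
    ((p ^ 2 : ℝ) : ℂ) ^ (-s) * ((1 + (ε / p) ^ 2 : ℝ) : ℂ) ^ (-(s + l / 2)) =
      ((p ^ l : ℝ) : ℂ) * ((ε ^ 2 + p ^ 2 : ℝ) : ℂ) ^ (-(s + l / 2)) := by
  have hP : ((p ^ 2 : ℝ) : ℂ) ≠ 0 := Complex.ofReal_ne_zero.2 (by positivity)
  have hPs :
      ((p ^ 2 : ℝ) : ℂ) ^ (-s) = ((p ^ 2 : ℝ) : ℂ) ^ (-(s + l / 2)) * ((p ^ l : ℝ) : ℂ) := by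
    rw [← Complex.ofReal_sq_cpow_div_two hp.le, ← Complex.cpow_add _ _ hP]
    ring_nf
  have hPw : ((p ^ 2 : ℝ) : ℂ) ^ (-(s + l / 2)) ≠ 0 := Complex.cpow_ne_zero_iff.2 (Or.inl hP)
  rw [hPs, show 1 + (ε / p) ^ 2 = (ε ^ 2 + p ^ 2) / p ^ 2 by field_simp; ring,
    Complex.ofReal_div, Complex.div_cpow_ofReal_nonneg (by positivity) (by positivity),
    mul_right_comm, mul_div_cancel₀ _ hPw, mul_comm]

theorem ofReal_sq_sub_sq_cpow_mul_deriv_one_add_sq_rpow {ε p z : ℝ} (hp : p ≠ 0)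
    (hz : (ε / p) ^ 2 ≤ z ^ 2) (l : ℝ) (s : ℂ) :
    (((z * p) ^ 2 - ε ^ 2 : ℝ) : ℂ) ^ (-s) *
        ((deriv (fun w : ℝ => (1 + w ^ 2) ^ (-l / 2)) z : ℝ) : ℂ) =
      -(l : ℂ) * ((p ^ 2 : ℝ) : ℂ) ^ (-s) *
        (((z ^ 2 - (ε / p) ^ 2 : ℝ) : ℂ) ^ (-s) * z *
          ((1 + z ^ 2 : ℝ) : ℂ) ^ (-(1 + (l : ℂ) / 2))) := by
  have h_factor : (z * p) ^ 2 - ε ^ 2 = p ^ 2 * (z ^ 2 - (ε / p) ^ 2) := by field_simp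
  rw [h_factor, Complex.ofReal_mul, Complex.mul_cpow_ofReal_nonneg (sq_nonneg p) (sub_nonneg.2 hz),
    (hasDerivAt_one_add_sq_rpow (-l / 2) z).deriv, Complex.ofReal_mul,
    Complex.ofReal_cpow (by positivity)]
  push_cast
  ring_nf

/-- For 1/2 < Re s < 1, ε, p, l > 0,
∫_{ε/p}^∞ [(zp)²-ε²]^{-s} d/dz[(1+z²)^{-l/2}] dz
  = -(l/2)·(Γ(s+l/2)Γ(1-s)/Γ(1+l/2))·p^l·(ε²+p²)^{-s-l/2}. -/
theorem key_integral_identity (ε p l : ℝ) (s : ℂ)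
    (hε : 0 < ε) (hp : 0 < p) (hl : 0 < l)
    (hs1 : 1 / 2 < s.re) (hs2 : s.re < 1) :
    ∫ z in Set.Ioi (ε / p),
        (((z * p) ^ 2 - ε ^ 2 : ℝ) : ℂ) ^ (-s) *
          ((deriv (fun w : ℝ => (1 + w ^ 2) ^ (-l / 2)) z : ℝ) : ℂ)
      = -((l : ℂ) / 2) *
          (Complex.Gamma (s + (l : ℂ) / 2) * Complex.Gamma (1 - s) /
            Complex.Gamma (1 + (l : ℂ) / 2)) *
          ((p ^ l : ℝ) : ℂ) * ((ε ^ 2 + p ^ 2 : ℝ) : ℂ) ^ (-s - (l : ℂ) / 2) := by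
  have ha : 0 ≤ ε / p := by positivity
  have hre_left : 0 < (1 - s).re := by simp only [Complex.sub_re, Complex.one_re]; linarith
  have hre_right : 0 < (s + l / 2).re := by
    simp only [Complex.add_re, Complex.div_ofNat_re, Complex.ofReal_re]; linarith
  have h_beta := setIntegral_Ioi_sq_sub_sq_cpow_mul_one_add_sq_cpow ha (1 - s) (s + l / 2)
  rw [sub_sub_cancel_left, Complex.betaIntegral_eq_Gamma_mul_div _ _ hre_left hre_right,
    show 1 - s + (s + l / 2) = 1 + l / 2 by ring] at h_beta
  rw [setIntegral_congr_fun measurableSet_Ioi fun z hz =>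
      ofReal_sq_sub_sq_cpow_mul_deriv_one_add_sq_rpow hp.ne'
        (pow_le_pow_left₀ ha (le_of_lt hz) 2) l s,
    integral_const_mul, h_beta, ← neg_add']
  linear_combination (-(l : ℂ) / 2 * (Complex.Gamma (1 - s) * Complex.Gamma (s + l / 2) /
    Complex.Gamma (1 + l / 2))) * ofReal_sq_cpow_neg_mul_one_add_div_sq_cpow hp ε l s
end

section
/- Schafheitlin's reduction formula: for the Bessel function J_ν, (j+2)∫^z x^{j+2} J_ν(x)² dx = (j+1)(ν² - (j+1)²/4)∫^z x^j J_ν(x)² dx + (1/2)[z^{j+1}(z J_ν'(z) - (j+1)J_ν(z)/2)² + z^{j+1}(z² - ν² + (j+1)²/4) J_ν(z)²], where the integrals denote antiderivatives (indefinite integrals agreeing up to constants). -/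
/-!
Differentiating the bracket with the product rule produces, besides the two claimed terms,
the summand `z ^ j (z J' - (j+1) J / 2) (z² J'' + z J' + (z² - ν²) J)`, which vanishes by
Bessel's equation.
-/

open Real

theorem ContDiff.hasDerivAt_deriv_of_two {𝕜 F : Type*} [NontriviallyNormedField 𝕜]
    [NormedAddCommGroup F] [NormedSpace 𝕜 F] {f : 𝕜 → F} (hf : ContDiff 𝕜 2 f) (x : 𝕜) :
    HasDerivAt (deriv f) (deriv (deriv f) x) x :=
  ((contDiff_succ_iff_deriv.mp hf).2.2.differentiable one_ne_zero x).hasDerivAt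

theorem hasDerivAt_schafheitlin_bracket {ν j z : ℝ} {J D : ℝ → ℝ} {D' : ℝ} (hz : 0 < z)
    (hJ : HasDerivAt J (D z) z) (hD : HasDerivAt D D' z) :
    HasDerivAt (fun w : ℝ =>
        (1 / 2) * (w ^ (j + 1) * (w * D w - (j + 1) * J w / 2) ^ 2 +
          w ^ (j + 1) * (w ^ 2 - ν ^ 2 + (j + 1) ^ 2 / 4) * (J w) ^ 2))
      ((j + 2) * z ^ (j + 2) * (J z) ^ 2 - (j + 1) * (ν ^ 2 - (j + 1) ^ 2 / 4) * z ^ j * (J z) ^ 2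
        + z ^ j * (z * D z - (j + 1) * J z / 2) *
          (z ^ 2 * D' + z * D z + (z ^ 2 - ν ^ 2) * J z)) z := by
  have hpow : HasDerivAt (fun w : ℝ => w ^ (j + 1)) ((j + 1) * z ^ j) z := by
    simpa using hasDerivAt_rpow_const (p := j + 1) (Or.inl hz.ne')
  have hA : HasDerivAt (fun w => w * D w - (j + 1) * J w / 2)
      (1 * D z + z * D' - (j + 1) * D z / 2) z :=
    ((hasDerivAt_id z).mul hD).sub ((hJ.const_mul (j + 1)).div_const 2)
  have hB : HasDerivAt (fun w : ℝ => w ^ 2 - ν ^ 2 + (j + 1) ^ 2 / 4) (2 * z ^ 1) z :=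
    ((hasDerivAt_pow 2 z).sub_const _).add_const _
  refine (((hpow.mul (hA.pow 2)).add ((hpow.mul hB).mul (hJ.pow 2))).const_mul
    (1 / 2 : ℝ)).congr_deriv ?_
  have hj1 : z ^ (j + 1) = z ^ j * z := by rw [rpow_add hz, rpow_one]
  have hj2 : z ^ (j + 2) = z ^ j * z ^ 2 := by rw [rpow_add hz, rpow_two]
  simp only [Pi.mul_apply, Pi.pow_apply]
  push_cast
  rw [hj1, hj2]
  ring

theorem schafheitlin_reduction_general (ν j : ℝ) (J : ℝ → ℝ) (hJ : ContDiff ℝ 2 J)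
    (hode : ∀ x : ℝ, x ^ 2 * deriv (deriv J) x + x * deriv J x + (x ^ 2 - ν ^ 2) * J x = 0)
    (z : ℝ) (hz : 0 < z) :
    deriv (fun w : ℝ =>
        (1 / 2) * (w ^ (j + 1) * (w * deriv J w - (j + 1) * J w / 2) ^ 2 +
          w ^ (j + 1) * (w ^ 2 - ν ^ 2 + (j + 1) ^ 2 / 4) * (J w) ^ 2)) z
      = (j + 2) * z ^ (j + 2) * (J z) ^ 2 -
        (j + 1) * (ν ^ 2 - (j + 1) ^ 2 / 4) * z ^ j * (J z) ^ 2 := by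
  have hJ' : HasDerivAt J (deriv J z) z :=
    (hJ.differentiable two_ne_zero z).hasDerivAt
  rw [(hasDerivAt_schafheitlin_bracket hz hJ' (hJ.hasDerivAt_deriv_of_two z)).deriv, hode z,
    mul_zero, add_zero]

/-- Schafheitlin's reduction formula: if J satisfies the Bessel equation
x²J'' + xJ' + (x²-ν²)J = 0, then the derivative in z of
(1/2)[z^{j+1}(zJ'(z) - (j+1)J(z)/2)² + z^{j+1}(z² - ν² + (j+1)²/4)J(z)²]
equals (j+2)z^{j+2}J(z)² - (j+1)(ν² - (j+1)²/4)z^j J(z)², for z > 0. -/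
theorem schafheitlin_reduction (ν j : ℝ) (J : ℝ → ℝ) (hJ : ContDiff ℝ 2 J)
    (hode : ∀ x : ℝ, x ^ 2 * deriv (deriv J) x + x * deriv J x + (x ^ 2 - ν ^ 2) * J x = 0)
    (hj : j + 2 ≠ 0) (z : ℝ) (hz : 0 < z) :
    deriv (fun w : ℝ =>
        (1 / 2) * (w ^ (j + 1) * (w * deriv J w - (j + 1) * J w / 2) ^ 2 +
          w ^ (j + 1) * (w ^ 2 - ν ^ 2 + (j + 1) ^ 2 / 4) * (J w) ^ 2)) z
      = (j + 2) * z ^ (j + 2) * (J z) ^ 2 -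
        (j + 1) * (ν ^ 2 - (j + 1) ^ 2 / 4) * z ^ j * (J z) ^ 2 :=
  schafheitlin_reduction_general ν j J hJ hode z hz
end

section
/- If μ > 0 is such that J_p(μ) = 0, then ∫₀¹ r³ [J̄_p(μr)² + J̄_{p+1}(μr)²] dr = (2p² + 3p + 1)/(3μ²) + 1/3, where J̄_q(x) := J_q(x)/J_{p+1}(μ). -/
open MeasureTheory intervalIntegral

/-- The Bessel function of the first kind J_ν(x), defined by its series. -/
noncomputable def besselJ (ν x : ℝ) : ℝ :=
  ∑' k : ℕ, (-1) ^ k / ((k.factorial : ℝ) * Real.Gamma (ν + k + 1)) *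
    (x / 2) ^ (2 * k) * (x / 2) ^ ν

/-!
Write `J_ν(x) = (x/2)^ν G_ν((x/2)²)` with `G_ν` entire. Termwise differentiation and two
coefficient identities give `G_ν' = -G_{ν+1}` and `(ν+1) G_{ν+1}(t) - G_ν(t) = t G_{ν+2}(t)`,
hence `J_p' = (p/x) J_p - J_{p+1}` and `J_{p+1}' = J_p - ((p+1)/x) J_{p+1}`. With these,
`r³ (J_p(μr)² + J_{p+1}(μr)²)` has an explicit primitive (Schafheitlin's reduction formula) that
vanishes at `r = 0`; at `r = 1` every term containing `J_p(μ) = 0` drops out, leaving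
`J_{p+1}(μ)²` times the right-hand side.
-/

noncomputable def besselCoeff (ν : ℝ) (k : ℕ) : ℝ :=
  (-1) ^ k / ((k.factorial : ℝ) * Real.Gamma (ν + k + 1))

noncomputable def besselEntire (ν t : ℝ) : ℝ :=
  ∑' k : ℕ, besselCoeff ν k * t ^ k

theorem besselJ_eq_rpow_mul_besselEntire (ν x : ℝ) :
    besselJ ν x = (x / 2) ^ ν * besselEntire ν ((x / 2) ^ 2) := by
  rw [besselJ, besselEntire, mul_comm, ← tsum_mul_right]
  exact tsum_congr fun k => by rw [besselCoeff, pow_mul]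

section Coefficients

variable {ν : ℝ}

theorem factorial_mul_Gamma_le_Gamma_add_nat (hν : 0 ≤ ν) (k : ℕ) :
    (k.factorial : ℝ) * Real.Gamma (ν + 1) ≤ Real.Gamma (ν + k + 1) := by
  induction k with
  | zero => simp
  | succ n ih =>
    have hpos : 0 < ν + n + 1 := by positivity
    rw [show ν + (n + 1 : ℕ) + 1 = (ν + n + 1) + 1 by push_cast; ring,
      Real.Gamma_add_one hpos.ne', Nat.factorial_succ, Nat.cast_mul, mul_assoc]
    gcongr
    push_cast
    linarith

theorem abs_besselCoeff_le (hν : 0 ≤ ν) (k : ℕ) :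
    |besselCoeff ν k| ≤ (Real.Gamma (ν + 1))⁻¹ / k.factorial := by
  have hΓ := Real.Gamma_pos_of_pos (show 0 < ν + 1 by positivity)
  have hf : (1 : ℝ) ≤ k.factorial := by exact_mod_cast k.factorial_pos
  have hΓk := factorial_mul_Gamma_le_Gamma_add_nat hν k
  rw [besselCoeff, abs_div, abs_pow, abs_neg, abs_one, one_pow,
    abs_of_pos (by positivity), div_le_div_iff₀ (by positivity) (by positivity), one_mul,
    inv_mul_eq_div, le_div_iff₀ hΓ]
  exact hΓk.trans (le_mul_of_one_le_left (Real.Gamma_pos_of_pos (by positivity)).le hf)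

theorem summable_besselCoeff_mul_pow (hν : 0 ≤ ν) (t : ℝ) :
    Summable fun k : ℕ => besselCoeff ν k * t ^ k := by
  refine .of_norm_bounded ((Real.summable_pow_div_factorial |t|).mul_left (Real.Gamma (ν + 1))⁻¹)
    fun k => ?_
  rw [norm_mul, norm_pow, Real.norm_eq_abs, Real.norm_eq_abs, mul_div_assoc', mul_div_right_comm]
  exact mul_le_mul_of_nonneg_right (abs_besselCoeff_le hν k) (by positivity)

theorem summable_nat_mul_pow_sub_one_div_factorial (R : ℝ) :
    Summable fun k : ℕ => k * R ^ (k - 1) / k.factorial := by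
  rw [← summable_nat_add_iff 1]
  refine (Real.summable_pow_div_factorial R).congr fun k => ?_
  rw [Nat.add_sub_cancel, Nat.factorial_succ]
  push_cast
  field_simp

theorem besselCoeff_succ_mul (hν : 0 ≤ ν) (k : ℕ) :
    besselCoeff ν (k + 1) * (k + 1) = -besselCoeff (ν + 1) k := by
  rw [besselCoeff, besselCoeff, show ν + (k + 1 : ℕ) + 1 = (ν + 1) + k + 1 by push_cast; ring,
    Nat.factorial_succ, pow_succ]
  have := (Real.Gamma_pos_of_pos (show 0 < ν + 1 + k + 1 by positivity)).ne'
  push_cast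
  field_simp

end Coefficients

section Entire

variable {ν : ℝ}

theorem norm_besselCoeff_mul_deriv_pow_le (hν : 0 ≤ ν) (k : ℕ) {x R : ℝ} (hx : |x| ≤ R) :
    ‖besselCoeff ν k * (k * x ^ (k - 1))‖ ≤
      (Real.Gamma (ν + 1))⁻¹ * (k * R ^ (k - 1) / k.factorial) := by
  rw [norm_mul, norm_mul, norm_pow, Real.norm_natCast, Real.norm_eq_abs, Real.norm_eq_abs,
    mul_div_assoc', mul_div_right_comm]
  gcongr
  exact abs_besselCoeff_le hν k

theorem hasDerivAt_besselEntire (hν : 0 ≤ ν) (t : ℝ) :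
    HasDerivAt (besselEntire ν) (-besselEntire (ν + 1) t) t := by
  set R := |t| + 1
  have ht : t ∈ Metric.ball (0 : ℝ) R := by simp [R]
  have hderiv := hasDerivAt_tsum_of_isPreconnected
    ((summable_nat_mul_pow_sub_one_div_factorial R).mul_left (Real.Gamma (ν + 1))⁻¹)
    Metric.isOpen_ball (convex_ball 0 R).isPreconnected
    (g := fun k x => besselCoeff ν k * x ^ k) (g' := fun k x => besselCoeff ν k * (k * x ^ (k - 1)))
    (fun k x _ => (hasDerivAt_pow k x).const_mul _)
    (fun k x hx => norm_besselCoeff_mul_deriv_pow_le hν k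
      (by simpa [Real.dist_eq] using (Metric.mem_ball.mp hx).le))
    ht (summable_besselCoeff_mul_pow hν t) ht
  have hshift (k : ℕ) : besselCoeff ν (k + 1) * ((k + 1 : ℕ) * t ^ (k + 1 - 1)) =
      -(besselCoeff (ν + 1) k * t ^ k) := by
    rw [Nat.add_sub_cancel, Nat.cast_succ, ← mul_assoc, besselCoeff_succ_mul hν, neg_mul]
  rw [tsum_eq_zero_add' (by simpa only [hshift] using (summable_besselCoeff_mul_pow
    (by positivity) t).neg)] at hderiv
  unfold besselEntire
  simpa only [hshift, tsum_neg, CharP.cast_eq_zero, zero_mul, mul_zero, zero_add] using hderiv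

theorem besselCoeff_recurrence_zero (hν : 0 ≤ ν) :
    (ν + 1) * besselCoeff (ν + 1) 0 = besselCoeff ν 0 := by
  have hpos : 0 < ν + 1 := by positivity
  rw [besselCoeff, besselCoeff, Nat.cast_zero, add_zero, add_zero, Real.Gamma_add_one hpos.ne']
  have := (Real.Gamma_pos_of_pos hpos).ne'
  field_simp

theorem besselCoeff_recurrence_succ (hν : 0 ≤ ν) (k : ℕ) :
    (ν + 1) * besselCoeff (ν + 1) (k + 1) - besselCoeff ν (k + 1) = besselCoeff (ν + 2) k := by
  have hpos : 0 < ν + k + 2 := by positivity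
  rw [besselCoeff, besselCoeff, besselCoeff,
    show ν + 1 + (k + 1 : ℕ) + 1 = (ν + k + 2) + 1 by push_cast; ring,
    show ν + 2 + k + 1 = (ν + k + 2) + 1 by ring,
    show ν + (k + 1 : ℕ) + 1 = ν + k + 2 by push_cast; ring,
    Real.Gamma_add_one hpos.ne', Nat.factorial_succ, pow_succ]
  have := (Real.Gamma_pos_of_pos hpos).ne'
  push_cast
  field_simp
  ring

theorem besselEntire_recurrence (hν : 0 ≤ ν) (t : ℝ) :
    (ν + 1) * besselEntire (ν + 1) t - besselEntire ν t = t * besselEntire (ν + 2) t := by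
  have h₁ := (summable_besselCoeff_mul_pow (ν := ν + 1) (by positivity) t).mul_left (ν + 1)
  have h₂ := summable_besselCoeff_mul_pow hν t
  rw [besselEntire, besselEntire, besselEntire, ← tsum_mul_left, ← h₁.tsum_sub h₂,
    (h₁.sub h₂).tsum_eq_zero_add, ← tsum_mul_left]
  simp only [pow_zero, mul_one, besselCoeff_recurrence_zero hν, sub_self, zero_add]
  refine tsum_congr fun k => ?_
  rw [← besselCoeff_recurrence_succ hν k, pow_succ]
  ring

end Entire

section BesselJ

variable {ν : ℝ}

theorem continuous_besselJ (hν : 0 ≤ ν) : Continuous (besselJ ν) := by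
  rw [funext (besselJ_eq_rpow_mul_besselEntire ν)]
  have hEntire : Continuous (besselEntire ν) :=
    continuous_iff_continuousAt.mpr fun t => (hasDerivAt_besselEntire hν t).continuousAt
  exact ((Real.continuous_rpow_const hν).comp (continuous_id.div_const 2)).mul
    (hEntire.comp ((continuous_id.div_const 2).pow 2))

theorem besselJ_add_besselJ_add_two (hν : 0 ≤ ν) {x : ℝ} (hx : 0 < x) :
    besselJ ν x + besselJ (ν + 2) x = 2 * (ν + 1) / x * besselJ (ν + 1) x := by
  have hx2 : 0 < x / 2 := by positivity
  have hrec := besselEntire_recurrence hν ((x / 2) ^ 2)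
  simp only [besselJ_eq_rpow_mul_besselEntire, show ν + 2 = ν + 1 + 1 by ring,
    Real.rpow_add_one hx2.ne']
  rw [show ν + 1 + 1 = ν + 2 by ring]
  generalize besselEntire ν ((x / 2) ^ 2) = g₀ at hrec ⊢
  generalize besselEntire (ν + 1) ((x / 2) ^ 2) = g₁ at hrec ⊢
  generalize besselEntire (ν + 2) ((x / 2) ^ 2) = g₂ at hrec ⊢
  field_simp
  linear_combination -4 * hrec

theorem hasDerivAt_besselJ (hν : 0 ≤ ν) {x : ℝ} (hx : 0 < x) :
    HasDerivAt (besselJ ν) (ν / x * besselJ ν x - besselJ (ν + 1) x) x := by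
  have hx2 : 0 < x / 2 := by positivity
  have hhalf : HasDerivAt (fun y : ℝ => y / 2) (1 / 2) x := (hasDerivAt_id x).div_const 2
  have hpow := (Real.hasDerivAt_rpow_const (p := ν) (.inl hx2.ne')).comp x hhalf
  have hEntire := (hasDerivAt_besselEntire hν ((x / 2) ^ 2)).comp x (hhalf.fun_pow 2)
  rw [funext (besselJ_eq_rpow_mul_besselEntire ν)]
  refine (hpow.mul hEntire).congr_deriv ?_
  simp only [besselJ_eq_rpow_mul_besselEntire, Real.rpow_add_one hx2.ne',
    Real.rpow_sub_one hx2.ne', Function.comp]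
  field_simp
  ring

theorem hasDerivAt_besselJ_add_one (hν : 0 ≤ ν) {x : ℝ} (hx : 0 < x) :
    HasDerivAt (besselJ (ν + 1)) (besselJ ν x - (ν + 1) / x * besselJ (ν + 1) x) x := by
  refine (hasDerivAt_besselJ (by positivity) hx).congr_deriv ?_
  rw [show ν + 1 + 1 = ν + 2 by ring]
  have hrec := besselJ_add_besselJ_add_two hν hx
  have := hx.ne'
  field_simp at hrec ⊢
  linear_combination -hrec

end BesselJ

-- Schafheitlin's reduction of `∫ r³ J_q(μr)² dr`, summed over `q = p, p + 1`;
-- `a` and `b` stand for `J_p(μr)` and `J_{p+1}(μr)`.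
noncomputable def cubicBesselPrimitive (p μ a b r : ℝ) : ℝ :=
  r ^ 4 / 3 * (a ^ 2 + b ^ 2) - (2 * p + 1) / (3 * μ) * r ^ 3 * (a * b)
    + (2 * p + 1) / (3 * μ ^ 2) * r ^ 2 * (p * a ^ 2 + (p + 1) * b ^ 2)
    - 2 * p * (p + 1) * (2 * p + 1) / (3 * μ ^ 3) * r * (a * b)

section Integral

variable {p μ : ℝ}

theorem hasDerivAt_cubicBesselPrimitive (hp : 0 ≤ p) (hμ : 0 < μ) {r : ℝ} (hr : 0 < r) :
    HasDerivAt (fun s => cubicBesselPrimitive p μ (besselJ p (μ * s)) (besselJ (p + 1) (μ * s)) s)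
      (r ^ 3 * (besselJ p (μ * r) ^ 2 + besselJ (p + 1) (μ * r) ^ 2)) r := by
  have hμr : 0 < μ * r := by positivity
  have hlin : HasDerivAt (fun s => μ * s) μ r := by simpa using (hasDerivAt_id r).const_mul μ
  have hA := (hasDerivAt_besselJ hp hμr).comp r hlin
  have hB := (hasDerivAt_besselJ_add_one hp hμr).comp r hlin
  have hAB := hA.mul hB
  unfold cubicBesselPrimitive
  refine (((((hasDerivAt_pow 4 r).div_const 3).mul ((hA.pow 2).add (hB.pow 2))).sub
    (((hasDerivAt_pow 3 r).const_mul _).mul hAB)).add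
    (((hasDerivAt_pow 2 r).const_mul _).mul (((hA.pow 2).const_mul p).add
      ((hB.pow 2).const_mul (p + 1))))).sub
    (((hasDerivAt_id r).const_mul _).mul hAB) |>.congr_deriv ?_
  simp only [Function.comp_apply, Pi.add_apply, Pi.mul_apply, Pi.pow_apply, id]
  field_simp
  ring

theorem integral_cube_mul_besselJ_sq_add_sq (hp : 0 ≤ p) (hμ : 0 < μ) :
    ∫ r in (0 : ℝ)..1, r ^ 3 * (besselJ p (μ * r) ^ 2 + besselJ (p + 1) (μ * r) ^ 2) =
      cubicBesselPrimitive p μ (besselJ p μ) (besselJ (p + 1) μ) 1 := by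
  have hA : Continuous fun r => besselJ p (μ * r) := (continuous_besselJ hp).comp (by fun_prop)
  have hB : Continuous fun r => besselJ (p + 1) (μ * r) :=
    (continuous_besselJ (by positivity)).comp (by fun_prop)
  rw [integral_eq_sub_of_hasDeriv_right_of_le zero_le_one
    (by unfold cubicBesselPrimitive; fun_prop)
    (fun r hr => (hasDerivAt_cubicBesselPrimitive hp hμ hr.1).hasDerivWithinAt)
    (Continuous.intervalIntegrable (by fun_prop) _ _)]
  simp [cubicBesselPrimitive]

end Integral

/-- If μ > 0 is a zero of J_p then
∫₀¹ r³[J̄_p(μr)² + J̄_{p+1}(μr)²] dr = (2p²+3p+1)/(3μ²) + 1/3,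
where J̄_q(x) = J_q(x)/J_{p+1}(μ). -/
theorem radial_integral_cubed (p μ : ℝ) (hp : 0 ≤ p) (hμ : 0 < μ)
    (hzero : besselJ p μ = 0) (hne : besselJ (p + 1) μ ≠ 0) :
    ∫ r in (0 : ℝ)..1, r ^ 3 *
        ((besselJ p (μ * r) / besselJ (p + 1) μ) ^ 2 +
         (besselJ (p + 1) (μ * r) / besselJ (p + 1) μ) ^ 2)
      = (2 * p ^ 2 + 3 * p + 1) / (3 * μ ^ 2) + 1 / 3 := by
  simp_rw [div_pow, ← add_div, ← mul_div_assoc]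
  rw [intervalIntegral.integral_div, integral_cube_mul_besselJ_sq_add_sq hp hμ,
    cubicBesselPrimitive, hzero]
  field_simp
  ring
end
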